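/- arXiv:1509.07802 — 4 statements merged into one kernel-verified Lean document; each statement's English description precedes it below -/
import Mathlib

section
/- Let N₁,…,N_n be T-point processes defined on an ergodic invertible probability-preserving system (Ω,ℱ,ℙ,S), each with moments of all orders. Suppose there exist a real c > 0, an integer j with 2 ≤ j ≤ n, integers k₂,…,k_j, and a nonzero σ-finite (T×⋯×T)-invariant measure ν on X^{n−j} such that for all A₁,…,A_n ∈ 𝒜_f: E[N₁(A₁)⋯N_n(A_n)] ≥ c·μ(A₁ ∩ T^{−k₂}A₂ ∩ ⋯ ∩ T^{−k_j}A_j)·ν(A_{j+1}×⋯×A_n) (when j = n the factor ν(A_{j+1}×⋯×A_n) is read as 1). Then for every A ∈ 𝒜_f, with positive ℙ-probability there exists x ∈ A such that x ∈ N₁(ω) and T^{k_i} x ∈ N_i(ω) for every 2 ≤ i ≤ j. -/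
open MeasureTheory ProbabilityTheory Filter
open scoped ENNReal NNReal

namespace SuShi

/-- A simple counting measure: a sum of Dirac masses over a countable set of distinct points
which meets every bounded set in a finite set. -/
def IsSimpleCounting {X : Type*} [MetricSpace X] [MeasurableSpace X] (ξ : Measure X) : Prop :=
  ∃ D : Set X, D.Countable ∧ (∀ s : Set X, Bornology.IsBounded s → (D ∩ s).Finite) ∧
    ξ = Measure.count.restrict D

/-- A `T`-point process on the system `(Ω, P, S)`. -/
structure IsTPointProcess {X Ω : Type*} [MetricSpace X] [MeasurableSpace X] [MeasurableSpace Ω]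
    (μ : Measure X) (T : Equiv.Perm X) (P : Measure Ω) (S : Ω → Ω) (N : Ω → Measure X) :
    Prop where
  measurable : Measurable N
  simple : ∀ᵐ ω ∂P, IsSimpleCounting (N ω)
  null : ∀ A : Set X, MeasurableSet A → μ A = 0 → ∀ᵐ ω ∂P, N ω A = 0
  equivariant : ∀ᵐ ω ∂P, N (S ω) = (N ω).map ⇑T

/-- `N` has intensity `ρ`: `E[N(A)] = ρ(A)` for every measurable `A`. -/
def HasIntensity {X Ω : Type*} [MeasurableSpace X] [MeasurableSpace Ω]
    (P : Measure Ω) (N : Ω → Measure X) (ρ : Measure X) : Prop :=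
  ∀ A : Set X, MeasurableSet A → ∫⁻ ω, N ω A ∂P = ρ A

/-- `N` has moments of order `n`: `E[N(A)^n] < ∞` for every `A` with `0 < μ A < ∞`. -/
def HasMomentsOfOrder {X Ω : Type*} [MeasurableSpace X] [MeasurableSpace Ω]
    (P : Measure Ω) (N : Ω → Measure X) (μ : Measure X) (n : ℕ) : Prop :=
  ∀ A : Set X, MeasurableSet A → 0 < μ A → μ A < ⊤ → ∫⁻ ω, (N ω A) ^ n ∂P < ⊤

/-- `N` has moments of all orders. -/
def HasAllMoments {X Ω : Type*} [MeasurableSpace X] [MeasurableSpace Ω]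
    (P : Measure Ω) (N : Ω → Measure X) (μ : Measure X) : Prop :=
  ∀ n : ℕ, 1 ≤ n → HasMomentsOfOrder P N μ n

/-- `N` is a free `T`-point process. -/
def IsFree {X Ω : Type*} [MeasurableSpace X] [MeasurableSpace Ω]
    (T : Equiv.Perm X) (P : Measure Ω) (N : Ω → Measure X) : Prop :=
  ∀ k : ℤ, k ≠ 0 → ∀ᵐ ω ∂P, ∀ x : X, ¬(N ω {x} = 1 ∧ N ω {(T ^ k) x} = 1)

/-- `N₁` and `N₂` are dissociated `T`-point processes. -/
def Dissociated {X Ω : Type*} [MeasurableSpace X] [MeasurableSpace Ω]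
    (T : Equiv.Perm X) (P : Measure Ω) (N₁ N₂ : Ω → Measure X) : Prop :=
  ∀ k : ℤ, ∀ᵐ ω ∂P, ∀ x : X, ¬(N₁ ω {x} = 1 ∧ ((N₂ ω).map ⇑(T ^ k)) {x} = 1)

/-- `P(Z = k)` for a Poisson random variable `Z` of parameter `l`. -/
noncomputable def poissonProb (l : ℝ) (k : ℕ) : ℝ≥0∞ :=
  ENNReal.ofReal (Real.exp (-l) * l ^ k / (Nat.factorial k))

/-- `f` is Poisson distributed with parameter `l` under `P`. -/
def IsPoissonDistributed {Ω : Type*} [MeasurableSpace Ω]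
    (P : Measure Ω) (f : Ω → ℝ≥0∞) (l : ℝ) : Prop :=
  ∀ k : ℕ, P {ω | f ω = (k : ℝ≥0∞)} = poissonProb l k

/-- `N` is a Poisson point process of intensity `α • base`: for pairwise disjoint sets of
finite positive `base`-measure, the values of `N` are independent Poisson random variables
with parameters `α * base (A i)`. -/
def IsPoissonPP {Z Ω : Type*} [MeasurableSpace Z] [MeasurableSpace Ω]
    (P : Measure Ω) (N : Ω → Measure Z) (base : Measure Z) (α : ℝ≥0) : Prop :=
  ∀ (k : ℕ) (A : Fin k → Set Z), (∀ i, MeasurableSet (A i)) →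
    (∀ i, 0 < base (A i)) → (∀ i, base (A i) < ⊤) →
    (Pairwise fun i j => Disjoint (A i) (A j)) →
    iIndepFun (fun i ω => N ω (A i)) P ∧
    ∀ i, IsPoissonDistributed P (fun ω => N ω (A i)) (α * (base (A i)).toReal)

/-- Property (P1): all finite direct products of the base system are ergodic. -/
def P1 {X : Type*} [MeasurableSpace X] (μ : Measure X) [SigmaFinite μ] (T : Equiv.Perm X) :
    Prop :=
  ∀ n : ℕ, 1 ≤ n →
    Ergodic (fun x : Fin n → X => fun i => T (x i)) (Measure.pi fun _ : Fin n => μ)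

/-- The measure `m_π^κ` on `X^n`, where the partition `π` of `Fin n` is encoded by the fibers of
a surjection `cl : Fin n → Fin m`: the image of `μ^{⊗ m}` by `(y_P)_P ↦ (T^{κ i} y_{cl i})_i`. -/
noncomputable def mPiKappa {X : Type*} [MeasurableSpace X] (μ : Measure X) [SigmaFinite μ]
    (T : Equiv.Perm X) {n m : ℕ} (cl : Fin n → Fin m) (κ : Fin n → ℤ) :
    Measure (Fin n → X) :=
  (Measure.pi fun _ : Fin m => μ).map fun y i => (T ^ κ i) (y (cl i))

/-- Property (P2): every `T^{×n}`-invariant measure on `X^n` which is finite on bounded sets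
and whose marginals are absolutely continuous w.r.t. `μ` is a countable sum of measures
`c • m_π^κ` with `c > 0` and `κ` `π`-compatible. -/
def P2 {X : Type*} [MetricSpace X] [MeasurableSpace X] (μ : Measure X) [SigmaFinite μ]
    (T : Equiv.Perm X) : Prop :=
  ∀ n : ℕ, 1 ≤ n → ∀ σ : Measure (Fin n → X),
    (∀ s : Set (Fin n → X), Bornology.IsBounded s → σ s < ⊤) →
    σ.map (fun x i => T (x i)) = σ →
    (∀ i : Fin n, σ.map (fun x => x i) ≪ μ) →
    ∃ (ι : Type) (_ : Countable ι) (c : ι → ℝ≥0) (m : ι → ℕ)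
      (cl : (j : ι) → Fin n → Fin (m j)) (κ : (j : ι) → Fin n → ℤ),
      (∀ j, 0 < c j) ∧ (∀ j, Function.Surjective (cl j)) ∧
      (∀ j i, (∀ i', cl j i' = cl j i → i ≤ i') → κ j i = 0) ∧
      σ = Measure.sum fun j => c j • mPiKappa μ T (cl j) (κ j)

/-- `ρ` is a joining of the two systems `(ν₁, S₁)` and `(ν₂, S₂)`. -/
def IsJoining {Y₁ Y₂ : Type*} [MeasurableSpace Y₁] [MeasurableSpace Y₂]
    (ν₁ : Measure Y₁) (S₁ : Y₁ → Y₁) (ν₂ : Measure Y₂) (S₂ : Y₂ → Y₂)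
    (ρ : Measure (Y₁ × Y₂)) : Prop :=
  IsProbabilityMeasure ρ ∧ ρ.map (Prod.map S₁ S₂) = ρ ∧
    ρ.map Prod.fst = ν₁ ∧ ρ.map Prod.snd = ν₂

/-- The two systems `(ν₁, S₁)` and `(ν₂, S₂)` are disjoint: their only joining is the
product measure. -/
def SystemsDisjoint {Y₁ Y₂ : Type*} [MeasurableSpace Y₁] [MeasurableSpace Y₂]
    (ν₁ : Measure Y₁) (S₁ : Y₁ → Y₁) (ν₂ : Measure Y₂) (S₂ : Y₂ → Y₂) : Prop :=
  ∀ ρ : Measure (Y₁ × Y₂), IsJoining ν₁ S₁ ν₂ S₂ ρ → ρ = ν₁.prod ν₂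

/-- `(X, μ, T)` admits a measurable law of large numbers. -/
def MeasurableLLN {X : Type*} [MeasurableSpace X] (μ : Measure X) (T : X → X) : Prop :=
  ∃ L : (ℕ → ℝ≥0∞) → ℝ≥0∞, Measurable L ∧
    ∀ B : Set X, MeasurableSet B →
      ∀ᵐ x ∂μ, L (fun k => B.indicator (1 : X → ℝ≥0∞) (T^[k] x)) = μ B
end SuShi

/-!
If the event had probability zero, fix a ball `B` with `μ B > 0` and `ν (B^{n-j}) > 0` and cut `X`
into countably many measurable cells `D m` of diameter `< ε`. The lower bound applied to the sets
`T^{k i} (A ∩ D m)` (`i < j`) and `B` (`i ≥ j`), summed over `m`, gives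
`c μ(A) ν(B^{n-j}) ≤ E[∑ m, ∏ i, N i (…)]` for every `ε`. The integrand is dominated by the same
product with `D m` replaced by `X`, integrable because the `N i` have moments of order `n`.
Almost surely only finitely many `x ∈ A` have `T^{k i} x ∈ N i` for some `i < j`, and none of them
for all `i < j`; once `ε` is below their minimal distance, no cell contains such points for every
`i < j`, so the integrand vanishes. Dominated convergence then forces `c μ(A) ν(B^{n-j}) = 0`.
-/

open Function Metric Set Topology

lemma ENNReal.prod_le_sum_pow_card {ι : Type*} [Fintype ι] [Nonempty ι] (f : ι → ℝ≥0∞) :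
    ∏ i, f i ≤ ∑ i, f i ^ Fintype.card ι := by
  obtain ⟨i₀, -, hi₀⟩ := Finset.exists_max_image Finset.univ f Finset.univ_nonempty
  calc ∏ i, f i ≤ f i₀ ^ Fintype.card ι :=
        Finset.prod_le_pow_card _ _ _ fun i _ => hi₀ i (Finset.mem_univ i)
    _ ≤ ∑ i, f i ^ Fintype.card ι :=
        Finset.single_le_sum (f := fun i => f i ^ Fintype.card ι) (fun _ _ => zero_le)
          (Finset.mem_univ i₀)

lemma ENNReal.tsum_prod_le_prod {ι : Type*} {s : Finset ι} {i₀ : ι} (hi₀ : i₀ ∈ s)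
    {a : ι → ℕ → ℝ≥0∞} {b : ι → ℝ≥0∞} (hab : ∀ i ∈ s, ∀ m, a i m ≤ b i)
    (ha₀ : ∑' m, a i₀ m ≤ b i₀) :
    ∑' m, ∏ i ∈ s, a i m ≤ ∏ i ∈ s, b i := by
  classical
  calc ∑' m, ∏ i ∈ s, a i m ≤ ∑' m, a i₀ m * ∏ i ∈ s.erase i₀, b i :=
        ENNReal.tsum_le_tsum fun m => by
          rw [← Finset.mul_prod_erase s _ hi₀]
          gcongr with i hi
          exact hab i (Finset.mem_of_mem_erase hi) m
    _ = (∑' m, a i₀ m) * ∏ i ∈ s.erase i₀, b i := ENNReal.tsum_mul_right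
    _ ≤ ∏ i ∈ s, b i := by
        rw [← Finset.mul_prod_erase s b hi₀]
        gcongr

lemma lintegral_prod_ne_top {Ω ι : Type*} [MeasurableSpace Ω] {P : Measure Ω} [Fintype ι]
    [Nonempty ι] {f : ι → Ω → ℝ≥0∞} (hf : ∀ i, AEMeasurable (f i) P)
    (hpow : ∀ i, ∫⁻ ω, f i ω ^ Fintype.card ι ∂P ≠ ⊤) :
    ∫⁻ ω, ∏ i, f i ω ∂P ≠ ⊤ := by
  refine ne_top_of_le_ne_top ?_ (lintegral_mono fun ω => ENNReal.prod_le_sum_pow_card (f · ω))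
  rw [lintegral_finsetSum' _ fun i _ => (hf i).pow_const _]
  exact ENNReal.sum_ne_top.2 fun i _ => hpow i

lemma measurePreserving_symm_zpow {α : Type*} [MeasurableSpace α] {μ : Measure α}
    {T : Equiv.Perm α} (hT : MeasurePreserving T μ μ) (hT' : Measurable T.symm) (m : ℤ) :
    MeasurePreserving ⇑(T ^ m).symm μ μ := by
  have hsymm : MeasurePreserving T.symm μ μ := hT.symm ⟨T, hT.measurable, hT'⟩
  obtain ⟨m, rfl | rfl⟩ := m.eq_nat_or_neg
  · rw [zpow_natCast, ← Equiv.Perm.inv_def, ← inv_pow, ← Equiv.Perm.iterate_eq_pow,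
      Equiv.Perm.inv_def]
    exact hsymm.iterate m
  · rw [zpow_neg, zpow_natCast, Equiv.Perm.inv_def, Equiv.symm_symm, ← Equiv.Perm.iterate_eq_pow]
    exact hT.iterate m

lemma eventually_measure_pos_of_iUnion_eq_univ {α : Type*} [MeasurableSpace α]
    {μ : Measure α} (hμ : μ ≠ 0) {s : ℕ → Set α} (hs : Monotone s) (hU : ⋃ R, s R = univ) :
    ∀ᶠ R in atTop, 0 < μ (s R) := by
  refine (tendsto_measure_iUnion_atTop hs).eventually_const_lt ?_
  rwa [hU, Measure.measure_univ_pos]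

lemma exists_measurableSet_measure_mem_Ioo_pi_pos {X ι : Type*} [MetricSpace X]
    [MeasurableSpace X] [OpensMeasurableSpace X] [Fintype ι] {μ : Measure X}
    (hμbdd : ∀ s : Set X, Bornology.IsBounded s → μ s < ⊤) (hμ : μ ≠ 0)
    {ν : Measure (ι → X)} (hν : ν ≠ 0) :
    ∃ B : Set X, MeasurableSet B ∧ μ B ∈ Ioo 0 ⊤ ∧ 0 < ν {y | ∀ r, y r ∈ B} := by
  obtain ⟨x₀, -⟩ := nonempty_of_measure_ne_zero (s := univ) (Measure.measure_univ_ne_zero.2 hμ)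
  have hmono : Monotone fun R : ℕ => closedBall x₀ R :=
    fun _ _ h => closedBall_subset_closedBall (Nat.cast_le.2 h)
  have hmono' : Monotone fun R : ℕ => {y : ι → X | ∀ r, y r ∈ closedBall x₀ R} :=
    fun _ _ h _ hy r => hmono h (hy r)
  have hcover : ⋃ R : ℕ, {y : ι → X | ∀ r, y r ∈ closedBall x₀ R} = univ := by
    refine eq_univ_of_forall fun y => mem_iUnion.2 ?_
    obtain ⟨R, hR⟩ := exists_nat_ge (∑ r, dist (y r) x₀)
    exact ⟨R, fun r =>
      (Finset.single_le_sum (fun r _ => dist_nonneg) (Finset.mem_univ r)).trans hR⟩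
  obtain ⟨R, hμR, hνR⟩ :=
    ((eventually_measure_pos_of_iUnion_eq_univ hμ hmono (iUnion_closedBall_nat x₀)).and
      (eventually_measure_pos_of_iUnion_eq_univ hν hmono' hcover)).exists
  exact ⟨_, measurableSet_closedBall, ⟨hμR, hμbdd _ isBounded_closedBall⟩, hνR⟩

lemma Set.Finite.exists_pos_forall_le_dist {X : Type*} [MetricSpace X] {S : Set X}
    (hS : S.Finite) : ∃ δ > 0, ∀ x ∈ S, ∀ y ∈ S, x ≠ y → δ ≤ dist x y := by
  have hsep : ∀ᶠ δ in 𝓝[>] (0 : ℝ), ∀ p ∈ S ×ˢ S, p.1 ≠ p.2 → δ ≤ dist p.1 p.2 := by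
    refine (eventually_all_finite (hS.prod hS)).2 fun p _ => ?_
    by_cases hp : p.1 = p.2
    · exact Eventually.of_forall fun _ h => absurd hp h
    · exact nhdsWithin_le_nhds <|
        (eventually_le_nhds (dist_pos.2 hp)).mono fun _ h _ => h
  obtain ⟨δ, hδ, hδpos⟩ := (hsep.and self_mem_nhdsWithin).exists
  exact ⟨δ, hδpos, fun x hx y hy hxy => hδ (x, y) ⟨hx, hy⟩ hxy⟩

/-- A set of diameter less than the minimal distance within `⋃ i, S i` meets each `S i` in the
same point, which would then lie in `⋂ i, S i`. -/
lemma exists_pos_forall_exists_disjoint_of_iInter_eq_empty {X ι : Type*} [MetricSpace X]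
    [Finite ι] [Nonempty ι] {S : ι → Set X} (hS : ∀ i, (S i).Finite) (h : ⋂ i, S i = ∅) :
    ∃ δ > 0, ∀ E : Set X, (∀ x ∈ E, ∀ y ∈ E, dist x y < δ) → ∃ i, Disjoint (S i) E := by
  obtain ⟨δ, hδ, hsep⟩ := (finite_iUnion hS).exists_pos_forall_le_dist
  refine ⟨δ, hδ, fun E hE => ?_⟩
  by_contra! hmeet
  choose x hxS hxE using fun i => not_disjoint_iff.1 (hmeet i)
  obtain ⟨i₀⟩ := ‹Nonempty ι›
  have hx : ∀ i, x i = x i₀ := fun i => by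
    by_contra hne
    exact (hsep _ (mem_iUnion_of_mem i (hxS i)) _ (mem_iUnion_of_mem i₀ (hxS i₀)) hne).not_gt
      (hE _ (hxE i) _ (hxE i₀))
  exact (h ▸ mem_iInter.2 fun i => hx i ▸ hxS i : x i₀ ∈ (∅ : Set X))

section Partition

structure IsMeasurablePartition {α : Type*} [MeasurableSpace α] (D : ℕ → Set α) : Prop where
  measurableSet : ∀ m, MeasurableSet (D m)
  pairwise_disjoint : Pairwise (Disjoint on D)
  iUnion_eq_univ : ⋃ m, D m = univ

variable {α : Type*} [MeasurableSpace α] {D : ℕ → Set α}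

lemma IsMeasurablePartition.preimage {β : Type*} [MeasurableSpace β] (hD : IsMeasurablePartition D)
    {f : β → α} (hf : Measurable f) : IsMeasurablePartition fun m => f ⁻¹' D m where
  measurableSet m := hf (hD.measurableSet m)
  pairwise_disjoint _ _ h := (hD.pairwise_disjoint h).preimage f
  iUnion_eq_univ := by rw [← preimage_iUnion, hD.iUnion_eq_univ, preimage_univ]

lemma IsMeasurablePartition.measure_eq_tsum (hD : IsMeasurablePartition D) (μ : Measure α)
    {s : Set α} (hs : MeasurableSet s) : μ s = ∑' m, μ (s ∩ D m) := by
  conv_lhs => rw [← inter_univ s, ← hD.iUnion_eq_univ, inter_iUnion]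
  exact measure_iUnion (fun _ _ h => ((hD.pairwise_disjoint h).inter_left' s).inter_right' s)
    fun m => hs.inter (hD.measurableSet m)

lemma exists_isMeasurablePartition_forall_dist_lt (X : Type*) [MetricSpace X]
    [TopologicalSpace.SeparableSpace X] [MeasurableSpace X] [OpensMeasurableSpace X] {ε : ℝ}
    (hε : 0 < ε) :
    ∃ D : ℕ → Set X, IsMeasurablePartition D ∧ ∀ m, ∀ x ∈ D m, ∀ y ∈ D m, dist x y < ε := by
  cases isEmpty_or_nonempty X
  · exact ⟨fun _ => ∅, ⟨fun _ => .empty, fun _ _ _ => disjoint_bot_left, Subsingleton.elim _ _⟩,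
      fun _ x => isEmptyElim x⟩
  obtain ⟨u, hu⟩ := TopologicalSpace.exists_dense_seq X
  refine ⟨disjointed fun l => ball (u l) (ε / 2),
    ⟨fun m => .disjointed (fun _ => measurableSet_ball) m, disjoint_disjointed _, ?_⟩,
    fun m x hx y hy => ?_⟩
  · rw [iUnion_disjointed]
    exact eq_univ_of_forall fun x => mem_iUnion.2 (hu.exists_dist_lt x (half_pos hε))
  · have hx' := mem_ball.1 (disjointed_subset _ m hx)
    have hy' := mem_ball.1 (disjointed_subset _ m hy)
    linarith [dist_triangle_right x y (u m)]

end Partition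

namespace SuShi

lemma IsSimpleCounting.apply_eq_count {X : Type*} [MetricSpace X] [MeasurableSpace X]
    [MeasurableSingletonClass X] {ξ : Measure X} (hξ : IsSimpleCounting ξ) (s : Set X) :
    ξ s = Measure.count {x ∈ s | ξ {x} = 1} := by
  obtain ⟨D, hDc, -, rfl⟩ := hξ
  have hatom : ∀ x, Measure.count.restrict D {x} = 1 ↔ x ∈ D := fun x => by
    by_cases hx : x ∈ D <;> simp [Measure.restrict_apply' hDc.measurableSet, hx]
  rw [Measure.restrict_apply' hDc.measurableSet]
  congr 1
  ext x
  simp only [mem_inter_iff, mem_ofPred_eq, hatom]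

section Moments

variable {X Ω : Type*} [MeasurableSpace X] [MeasurableSpace Ω] {P : Measure Ω} {μ : Measure X}

lemma HasAllMoments.ae_ne_top {N : Ω → Measure X} (hN : Measurable N)
    (hmom : HasAllMoments P N μ) {A : Set X} (hA : MeasurableSet A) (hA' : μ A ∈ Ioo 0 ⊤) :
    ∀ᵐ ω ∂P, N ω A ≠ ⊤ :=
  (ae_lt_top ((Measure.measurable_coe hA).comp hN) (by
    simpa using (hmom 1 le_rfl A hA hA'.1 hA'.2).ne)).mono fun _ h => h.ne

lemma lintegral_prod_ne_top_of_hasAllMoments {ι : Type*} [Fintype ι] [Nonempty ι]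
    {N : ι → Ω → Measure X} (hN : ∀ i, Measurable (N i)) (hmom : ∀ i, HasAllMoments P (N i) μ)
    {A : ι → Set X} (hA : ∀ i, MeasurableSet (A i)) (hA' : ∀ i, μ (A i) ∈ Ioo 0 ⊤) :
    ∫⁻ ω, ∏ i, N i ω (A i) ∂P ≠ ⊤ :=
  lintegral_prod_ne_top (fun i => ((Measure.measurable_coe (hA i)).comp (hN i)).aemeasurable)
    fun i => (hmom i _ Fintype.card_pos (A i) (hA i) (hA' i).1 (hA' i).2).ne

end Moments

section OrbitBox

variable {X : Type*} {n : ℕ}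

def orbitBox (T : Equiv.Perm X) (j : ℕ) (k : Fin n → ℤ) (A B E : Set X) (i : Fin n) : Set X :=
  if (i : ℕ) < j then (T ^ k i).symm ⁻¹' (A ∩ E) else B

variable {T : Equiv.Perm X} {j : ℕ} {k : Fin n → ℤ} {A B E : Set X}

lemma subset_iInter_preimage_orbitBox :
    A ∩ E ⊆ ⋂ i : { i : Fin n // (i : ℕ) < j }, ⇑(T ^ k i.1) ⁻¹' orbitBox T j k A B E i.1 :=
  subset_iInter fun i => by rw [orbitBox, if_pos i.2, Equiv.preimage_symm_preimage]

lemma setOf_forall_mem_orbitBox :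
    {y : { i : Fin n // j ≤ (i : ℕ) } → X | ∀ r, y r ∈ orbitBox T j k A B E r.1} =
      {y | ∀ r, y r ∈ B} := by
  ext y
  refine forall_congr' fun r => ?_
  rw [orbitBox, if_neg (not_lt.2 r.2)]

variable [MeasurableSpace X]

lemma measurableSet_orbitBox (hT : ∀ m : ℤ, Measurable ⇑(T ^ m).symm) (hA : MeasurableSet A)
    (hB : MeasurableSet B) (hE : MeasurableSet E) (i : Fin n) :
    MeasurableSet (orbitBox T j k A B E i) := by
  unfold orbitBox
  split_ifs
  exacts [hT _ (hA.inter hE), hB]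

lemma measure_orbitBox_mem_Ioo {μ : Measure X} (hT : ∀ m : ℤ, MeasurePreserving ⇑(T ^ m).symm μ μ)
    (hAE : MeasurableSet (A ∩ E)) (hAE' : μ (A ∩ E) ∈ Ioo 0 ⊤) (hB : μ B ∈ Ioo 0 ⊤) (i : Fin n) :
    μ (orbitBox T j k A B E i) ∈ Ioo 0 ⊤ := by
  unfold orbitBox
  split_ifs
  exacts [(hT _).measure_preimage hAE.nullMeasurableSet ▸ hAE', hB]

lemma tsum_prod_orbitBox_le (hT : ∀ m : ℤ, Measurable ⇑(T ^ m).symm) (hA : MeasurableSet A)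
    (hj : 0 < j) (hjn : j ≤ n) {D : ℕ → Set X} (hD : IsMeasurablePartition D)
    (ξ : Fin n → Measure X) :
    ∑' m, ∏ i, ξ i (orbitBox T j k A B (D m) i) ≤ ∏ i, ξ i (orbitBox T j k A B univ i) := by
  have h0 : ((⟨0, by omega⟩ : Fin n) : ℕ) < j := hj
  refine ENNReal.tsum_prod_le_prod (Finset.mem_univ (⟨0, by omega⟩ : Fin n))
    (fun i _ m => measure_mono ?_) ?_
  · unfold orbitBox
    split_ifs
    exacts [preimage_mono (inter_subset_inter_right _ (subset_univ _)), subset_rfl]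
  · simp only [orbitBox, if_pos h0, inter_univ]
    exact ((hD.preimage (hT _)).measure_eq_tsum _ (hT _ hA)).ge

lemma measurable_tsum_prod_orbitBox {Ω : Type*} [MeasurableSpace Ω]
    (hT : ∀ m : ℤ, Measurable ⇑(T ^ m).symm) (hA : MeasurableSet A) (hB : MeasurableSet B)
    {D : ℕ → Set X} (hD : IsMeasurablePartition D) {N : Fin n → Ω → Measure X}
    (hN : ∀ i, Measurable (N i)) :
    Measurable fun ω => ∑' m, ∏ i, N i ω (orbitBox T j k A B (D m) i) :=
  .tsum fun m => Finset.measurable_prod _ fun i _ =>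
    (Measure.measurable_coe (measurableSet_orbitBox hT hA hB (hD.measurableSet m) i)).comp (hN i)

lemma le_lintegral_tsum_prod_orbitBox {Ω : Type*} [MeasurableSpace Ω] {μ : Measure X}
    (hT : ∀ m : ℤ, MeasurePreserving ⇑(T ^ m).symm μ μ) {P : Measure Ω}
    {N : Fin n → Ω → Measure X} (hN : ∀ i, Measurable (N i)) {c : ℝ}
    {ν : Measure ({ i : Fin n // j ≤ (i : ℕ) } → X)}
    (hlower : ∀ A : Fin n → Set X, (∀ i, MeasurableSet (A i)) →
      (∀ i, 0 < μ (A i)) → (∀ i, μ (A i) < ⊤) →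
      ENNReal.ofReal c * μ (⋂ i : { i : Fin n // (i : ℕ) < j }, ⇑(T ^ k i.1) ⁻¹' A i.1) *
          ν {y | ∀ r, y r ∈ A r.1} ≤
        ∫⁻ ω, ∏ i, N i ω (A i) ∂P)
    (hA : MeasurableSet A) (hAtop : μ A < ⊤) (hBm : MeasurableSet B) (hB : μ B ∈ Ioo 0 ⊤)
    {D : ℕ → Set X} (hD : IsMeasurablePartition D) :
    ENNReal.ofReal c * μ A * ν {y | ∀ r, y r ∈ B} ≤
      ∫⁻ ω, ∑' m, ∏ i, N i ω (orbitBox T j k A B (D m) i) ∂P := by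
  have hmeas m := measurableSet_orbitBox (j := j) (k := k) (fun m => (hT m).measurable) hA hBm
    (hD.measurableSet m)
  have hcell : ∀ m, ENNReal.ofReal c * μ (A ∩ D m) * ν {y | ∀ r, y r ∈ B} ≤
      ∫⁻ ω, ∏ i, N i ω (orbitBox T j k A B (D m) i) ∂P := by
    intro m
    rcases eq_or_ne (μ (A ∩ D m)) 0 with h0 | h0
    · simp [h0]
    have hAD : μ (A ∩ D m) ∈ Ioo 0 ⊤ :=
      ⟨pos_iff_ne_zero.2 h0, (measure_mono inter_subset_left).trans_lt hAtop⟩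
    have hbox := measure_orbitBox_mem_Ioo (j := j) (k := k) hT (hA.inter (hD.measurableSet m))
      hAD hB
    calc ENNReal.ofReal c * μ (A ∩ D m) * ν {y | ∀ r, y r ∈ B}
        ≤ ENNReal.ofReal c * μ (⋂ i : { i : Fin n // (i : ℕ) < j },
            ⇑(T ^ k i.1) ⁻¹' orbitBox T j k A B (D m) i.1) *
            ν {y | ∀ r, y r ∈ orbitBox T j k A B (D m) r.1} := by
          rw [setOf_forall_mem_orbitBox]
          gcongr
          exact subset_iInter_preimage_orbitBox
      _ ≤ _ := hlower _ (hmeas m) (fun i => (hbox i).1) fun i => (hbox i).2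
  calc ENNReal.ofReal c * μ A * ν {y | ∀ r, y r ∈ B}
      = ∑' m, ENNReal.ofReal c * μ (A ∩ D m) * ν {y | ∀ r, y r ∈ B} := by
        rw [ENNReal.tsum_mul_right, ENNReal.tsum_mul_left, ← hD.measure_eq_tsum μ hA]
    _ ≤ ∑' m, ∫⁻ ω, ∏ i, N i ω (orbitBox T j k A B (D m) i) ∂P := ENNReal.tsum_le_tsum hcell
    _ = ∫⁻ ω, ∑' m, ∏ i, N i ω (orbitBox T j k A B (D m) i) ∂P :=
        (lintegral_tsum fun m => (Finset.measurable_prod _ fun i _ =>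
          (Measure.measurable_coe (hmeas m i)).comp (hN i)).aemeasurable).symm

lemma tendsto_tsum_prod_orbitBox_zero [MetricSpace X] [MeasurableSingletonClass X] (hj : 0 < j)
    (hjn : j ≤ n) {ξ : Fin n → Measure X} (hξ : ∀ i : Fin n, (i : ℕ) < j → IsSimpleCounting (ξ i))
    (hfin : ∀ i : Fin n, (i : ℕ) < j → ξ i (orbitBox T j k A B univ i) ≠ ⊤)
    (hno : ¬ ∃ x ∈ A, ∀ i : Fin n, (i : ℕ) < j → ξ i {(T ^ k i) x} = 1)
    {D : ℕ → ℕ → Set X} {ε : ℕ → ℝ} (hε : Tendsto ε atTop (𝓝 0))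
    (hD : ∀ q m, ∀ x ∈ D q m, ∀ y ∈ D q m, dist x y < ε q) :
    Tendsto (fun q => ∑' m, ∏ i, ξ i (orbitBox T j k A B (D q m) i)) atTop (𝓝 0) := by
  let S : { i : Fin n // (i : ℕ) < j } → Set X := fun i => {x ∈ A | ξ i.1 {(T ^ k i.1) x} = 1}
  have hS : ∀ i, (S i).Finite := by
    intro i
    have hi := hfin i.1 i.2
    rw [orbitBox, if_pos i.2, inter_univ, (hξ i.1 i.2).apply_eq_count, Ne,
      Measure.count_apply_eq_top, not_infinite] at hi
    refine (hi.preimage (T ^ k i.1).injective.injOn).subset fun x hx => ?_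
    simpa [S] using hx
  have hempty : ⋂ i, S i = ∅ := eq_empty_of_forall_notMem fun x hx =>
    hno ⟨x, (mem_iInter.1 hx ⟨⟨0, by omega⟩, hj⟩).1, fun i hi => (mem_iInter.1 hx ⟨i, hi⟩).2⟩
  have : Nonempty { i : Fin n // (i : ℕ) < j } := ⟨⟨⟨0, by omega⟩, hj⟩⟩
  obtain ⟨δ, hδ, hsep⟩ := exists_pos_forall_exists_disjoint_of_iInter_eq_empty hS hempty
  refine tendsto_const_nhds.congr' ?_
  filter_upwards [hε.eventually (gt_mem_nhds hδ)] with q hq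
  refine (ENNReal.tsum_eq_zero.2 fun m => ?_).symm
  obtain ⟨i, hi⟩ := hsep (D q m) fun x hx y hy => (hD q m x hx y hy).trans hq
  refine Finset.prod_eq_zero (Finset.mem_univ i.1) ?_
  rw [orbitBox, if_pos i.2, (hξ i.1 i.2).apply_eq_count, Measure.count_eq_zero_iff]
  refine eq_empty_of_forall_notMem fun y ⟨⟨hyA, hyE⟩, hy⟩ => disjoint_left.1 hi ?_ hyE
  exact ⟨hyA, by simpa using hy⟩

end OrbitBox

theorem stmt3_general {X : Type*} [MetricSpace X] [TopologicalSpace.SeparableSpace X]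
    [MeasurableSpace X] [BorelSpace X]
    (μ : Measure X) (hμbdd : ∀ s : Set X, Bornology.IsBounded s → μ s < ⊤)
    (hμinf : μ Set.univ = ⊤)
    (T : Equiv.Perm X) (hTinv : Measurable ⇑T.symm)
    (hTpres : MeasurePreserving ⇑T μ μ)
    {Ω : Type*} [MeasurableSpace Ω] (P : Measure Ω)
    (S : Equiv.Perm Ω)
    (n j : ℕ) (hj2 : 2 ≤ j) (hjn : j ≤ n)
    (N : Fin n → Ω → Measure X)
    (hN : ∀ i, IsTPointProcess μ T P ⇑S (N i))
    (hmom : ∀ i, HasAllMoments P (N i) μ)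
    (c : ℝ) (hc : 0 < c)
    (k : Fin n → ℤ)
    (ν : Measure ({ i : Fin n // j ≤ (i : ℕ) } → X)) (hν : ν ≠ 0)
    (hlower : ∀ A : Fin n → Set X, (∀ i, MeasurableSet (A i)) →
      (∀ i, 0 < μ (A i)) → (∀ i, μ (A i) < ⊤) →
      ENNReal.ofReal c * μ (⋂ i : { i : Fin n // (i : ℕ) < j }, ⇑(T ^ k i.1) ⁻¹' A i.1) *
          ν {y | ∀ r, y r ∈ A r.1} ≤
        ∫⁻ ω, ∏ i, N i ω (A i) ∂P) :
    ∀ A : Set X, MeasurableSet A → 0 < μ A → μ A < ⊤ →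
      0 < P {ω | ∃ x ∈ A, ∀ i : Fin n, (i : ℕ) < j → N i ω {(T ^ k i) x} = 1} := by
  intro A hA hA0 hAtop
  by_contra hzero
  have hno : ∀ᵐ ω ∂P, ¬ ∃ x ∈ A, ∀ i : Fin n, (i : ℕ) < j → N i ω {(T ^ k i) x} = 1 := by
    simpa only [ae_iff, not_not, not_lt, nonpos_iff_eq_zero] using hzero
  obtain ⟨B, hBm, hB, hνB⟩ := exists_measurableSet_measure_mem_Ioo_pi_pos hμbdd
    (fun h => by simp [h] at hμinf) hν
  have hT := measurePreserving_symm_zpow hTpres hTinv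
  have hTm m := (hT m).measurable
  choose D hD hDdist using fun q : ℕ =>
    exists_isMeasurablePartition_forall_dist_lt X (Nat.one_div_pos_of_nat (n := q) (α := ℝ))
  have hbox_meas i := measurableSet_orbitBox (j := j) (k := k) hTm hA hBm .univ i
  have hbox_Ioo i := measure_orbitBox_mem_Ioo (j := j) (k := k) hT (hA.inter .univ)
    (by rw [inter_univ]; exact ⟨hA0, hAtop⟩) hB i
  have : Nonempty (Fin n) := ⟨⟨0, by omega⟩⟩
  have hG := lintegral_prod_ne_top_of_hasAllMoments (fun i => (hN i).measurable) hmom hbox_meas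
    hbox_Ioo
  have hfin : ∀ᵐ ω ∂P, ∀ i, N i ω (orbitBox T j k A B univ i) ≠ ⊤ :=
    ae_all_iff.2 fun i => (hmom i).ae_ne_top (hN i).measurable (hbox_meas i) (hbox_Ioo i)
  have hlim : ∀ᵐ ω ∂P, Tendsto (fun q => ∑' m, ∏ i, N i ω (orbitBox T j k A B (D q m) i))
      atTop (𝓝 0) := by
    filter_upwards [ae_all_iff.2 fun i => (hN i).simple, hfin, hno] with ω hsimple hfin hno
    exact tendsto_tsum_prod_orbitBox_zero (by omega) hjn (fun i _ => hsimple i)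
      (fun i _ => hfin i) hno tendsto_one_div_add_atTop_nhds_zero_nat hDdist
  have hlim_integral := tendsto_lintegral_of_dominated_convergence _
    (fun q => measurable_tsum_prod_orbitBox hTm hA hBm (hD q) fun i => (hN i).measurable)
    (fun q => ae_of_all _ fun ω => tsum_prod_orbitBox_le hTm hA (by omega) hjn (hD q) (N · ω))
    hG hlim
  have hle := ge_of_tendsto' hlim_integral fun q =>
    le_lintegral_tsum_prod_orbitBox hT (fun i => (hN i).measurable) hlower hA hAtop hBm hB (hD q)
  rw [lintegral_zero, nonpos_iff_eq_zero] at hle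
  exact mul_ne_zero (mul_ne_zero (ENNReal.ofReal_pos.2 hc).ne' hA0.ne') hνB.ne' hle

/-- if the joint moment measure of `N₁,…,N_n` dominates a "partly diagonal"
measure, then with positive probability the first `j` processes have points on a common
`T`-orbit, located in any prescribed set `A` of finite positive measure. -/
theorem stmt3 {X : Type*} [MetricSpace X] [CompleteSpace X] [TopologicalSpace.SeparableSpace X]
    [MeasurableSpace X] [BorelSpace X]
    (μ : Measure X) (hμbdd : ∀ s : Set X, Bornology.IsBounded s → μ s < ⊤)
    (hμinf : μ Set.univ = ⊤)
    (T : Equiv.Perm X) (hT : Measurable ⇑T) (hTinv : Measurable ⇑T.symm)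
    (hTpres : MeasurePreserving ⇑T μ μ)
    (hTcons : Conservative ⇑T μ) (hTerg : Ergodic ⇑T μ)
    {Ω : Type*} [MeasurableSpace Ω] (P : Measure Ω) [IsProbabilityMeasure P]
    (S : Equiv.Perm Ω) (hS : Measurable ⇑S) (hSinv : Measurable ⇑S.symm)
    (hSerg : Ergodic ⇑S P)
    (n j : ℕ) (hj2 : 2 ≤ j) (hjn : j ≤ n)
    (N : Fin n → Ω → Measure X)
    (hN : ∀ i, IsTPointProcess μ T P ⇑S (N i))
    (hmom : ∀ i, HasAllMoments P (N i) μ)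
    (c : ℝ) (hc : 0 < c)
    (k : Fin n → ℤ) (hk0 : ∀ i : Fin n, (i : ℕ) = 0 → k i = 0)
    (ν : Measure ({ i : Fin n // j ≤ (i : ℕ) } → X)) [SigmaFinite ν] (hν : ν ≠ 0)
    (hνinv : ν.map (fun y r => T (y r)) = ν)
    (hlower : ∀ A : Fin n → Set X, (∀ i, MeasurableSet (A i)) →
      (∀ i, 0 < μ (A i)) → (∀ i, μ (A i) < ⊤) →
      ENNReal.ofReal c * μ (⋂ i : { i : Fin n // (i : ℕ) < j }, ⇑(T ^ k i.1) ⁻¹' A i.1) *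
          ν {y | ∀ r, y r ∈ A r.1} ≤
        ∫⁻ ω, ∏ i, N i ω (A i) ∂P) :
    ∀ A : Set X, MeasurableSet A → 0 < μ A → μ A < ⊤ →
      0 < P {ω | ∃ x ∈ A, ∀ i : Fin n, (i : ℕ) < j → N i ω {(T ^ k i) x} = 1} :=
  stmt3_general μ hμbdd hμinf T hTinv hTpres P S n j hj2 hjn N hN hmom c hc k ν hν hlower

end SuShi
end

section
/- Let N be a T-point process on an invertible probability-preserving system (Ω,ℱ,ℙ,S) with moments of order 2, whose second order moment measure satisfies E[N(A₁)N(A₂)] = μ(A₁ ∩ A₂) + μ(A₁)μ(A₂) for all A₁, A₂ ∈ 𝒜_f. Then N is free. -/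
open MeasureTheory ProbabilityTheory Filter
open scoped ENNReal NNReal

namespace SuShi

/-!
For disjoint `A`, `B` of finite measure the second moment hypothesis reads
`E[N(A) N(B)] = μ(A) μ(B)`. Cut the points that `T^k` moves by at least `ε` into pieces `Aᵢ` of
diameter `< r ≤ ε`: each `Aᵢ` is disjoint from `T^k Aᵢ`, so the probability that some `x ∈ Aᵢ`
and `T^k x` are both points of `N` is at most `μ(Aᵢ)²`. Summing over `i`, the probability of such a
pair is at most the `μ ⊗ μ`-mass of the `r`-neighbourhood of the diagonal, which tends to `0` with
`r` because `μ` has no atoms. Atoms of `μ` and a non-null set of `T^k`-fixed points are both ruled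
out by ergodicity in infinite measure (with conservativity for atoms): each would generate an
invariant set of finite positive measure.
-/

open Metric Set Function Topology

section Perm

variable {X : Type*}

theorem zpow_apply_eq_zpow_emod_apply {T : Equiv.Perm X} {k : ℤ} {x : X} (hx : (T ^ k) x = x)
    (i : ℤ) : (T ^ i) x = (T ^ (i % k)) x := by
  conv_lhs => rw [← Int.emod_add_mul_ediv i k, zpow_add, zpow_mul, Equiv.Perm.mul_apply,
    Equiv.Perm.zpow_apply_eq_self_of_apply_eq_self hx]

variable [MeasurableSpace X] {μ : Measure X} {T : Equiv.Perm X}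

theorem measurePreserving_perm_zpow (hT : MeasurePreserving T μ μ) (hTinv : Measurable T.symm)
    (k : ℤ) : MeasurePreserving ⇑(T ^ k) μ μ := by
  cases k with
  | ofNat n => simpa [Equiv.Perm.coe_pow] using hT.iterate n
  | negSucc n =>
    rw [zpow_negSucc, ← inv_pow, Equiv.Perm.coe_pow]
    exact (hT.symm ⟨T, hT.measurable, hTinv⟩).iterate (n + 1)

end Perm

section Ergodic

variable {X : Type*} [MeasurableSpace X] {μ : Measure X} {T : Equiv.Perm X}

theorem measure_eq_zero_of_forall_zpow_apply_eq (hT : Ergodic T μ) (hTinv : Measurable T.symm)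
    (hμ : μ univ = ⊤) {k : ℤ} (hk : k ≠ 0) {U : Set X} (hU : MeasurableSet U) (hUfin : μ U ≠ ⊤)
    (hUfix : ∀ x ∈ U, (T ^ k) x = x) : μ U = 0 := by
  have hmp := measurePreserving_perm_zpow hT.toMeasurePreserving hTinv
  -- The `T`-orbit of `U` is invariant and, since points of `U` are `k`-periodic, it is covered
  -- by `|k|` translates of `U`; ergodicity in infinite measure forces it to be null.
  set V := ⋃ i : ℤ, ⇑(T ^ i) ⁻¹' U
  have hVmeas : MeasurableSet V := .iUnion fun i => (hmp i).measurable hU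
  have hVinv : ⇑T ⁻¹' V = V := by
    ext z
    simp only [V, mem_preimage, mem_iUnion]
    constructor
    · rintro ⟨i, hi⟩
      exact ⟨i + 1, by rwa [zpow_add_one, Equiv.Perm.mul_apply]⟩
    · rintro ⟨i, hi⟩
      exact ⟨i - 1, by rwa [← Equiv.Perm.mul_apply, ← zpow_add_one, sub_add_cancel]⟩
  have hVsub : V ⊆ ⋃ m ∈ Finset.range k.natAbs, ⇑(T ^ (-(m : ℤ))) ⁻¹' U := by
    simp only [V, iUnion_subset_iff]
    intro i z hz
    have hm := Int.emod_nonneg (-i) hk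
    refine mem_biUnion (x := ((-i) % k).toNat)
      (Finset.mem_range.2 (by have := Int.emod_lt (-i) hk; omega)) ?_
    have hzu : z = (T ^ ((-i) % k)) ((T ^ i) z) := by
      rw [← zpow_apply_eq_zpow_emod_apply (hUfix _ hz), ← Equiv.Perm.mul_apply, ← zpow_add,
        neg_add_cancel, zpow_zero, Equiv.Perm.one_apply]
    rwa [mem_preimage, Int.toNat_of_nonneg hm, hzu, ← Equiv.Perm.mul_apply, ← zpow_add,
      neg_add_cancel, zpow_zero, Equiv.Perm.one_apply]
  have hVfin : μ V ≠ ⊤ := by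
    refine ne_top_of_le_ne_top ?_ ((measure_mono hVsub).trans (measure_biUnion_finset_le _ _))
    simp only [(hmp _).measure_preimage hU.nullMeasurableSet, Finset.sum_const, Finset.card_range,
      nsmul_eq_mul]
    exact ENNReal.mul_ne_top (ENNReal.natCast_ne_top _) hUfin
  rcases hT.measure_self_or_compl_eq_zero hVmeas hVinv with hV | hV
  · exact measure_mono_null (subset_iUnion_of_subset 0 (by simp)) hV
  · refine absurd ?_ hVfin
    rw [← top_le_iff, ← hμ, ← union_compl_self V]
    exact (measure_union_le V Vᶜ).trans (by rw [hV, add_zero])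

theorem measure_fixedPoints_zpow_eq_zero [SigmaFinite μ] [MeasurableEq X] (hT : Ergodic T μ)
    (hTinv : Measurable T.symm) (hμ : μ univ = ⊤) {k : ℤ} (hk : k ≠ 0) :
    μ {x | (T ^ k) x = x} = 0 := by
  have hF : MeasurableSet {x | (T ^ k) x = x} :=
    measurableSet_eq_fun (measurePreserving_perm_zpow hT.toMeasurePreserving hTinv k).measurable
      measurable_id
  rw [← inter_univ {x | (T ^ k) x = x}, ← iUnion_spanningSets μ, inter_iUnion]
  exact measure_iUnion_null fun n =>
    measure_eq_zero_of_forall_zpow_apply_eq hT hTinv hμ hk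
      (hF.inter (measurableSet_spanningSets μ n))
      (measure_inter_lt_top_of_right_ne_top (measure_spanningSets_lt_top μ n).ne).ne
      fun _ hx => hx.1

theorem measure_singleton_eq_zero_of_conservative [MeasurableSingletonClass X]
    (hT : Ergodic T μ) (hTc : Conservative T μ) (hTinv : Measurable T.symm) (hμ : μ univ = ⊤)
    (x : X) (hx : μ {x} ≠ ⊤) : μ {x} = 0 := by
  by_contra h0
  obtain ⟨y, rfl, m, hm, hmx⟩ :=
    hTc.exists_mem_iterate_mem (measurableSet_singleton x).nullMeasurableSet h0
  refine h0 (measure_eq_zero_of_forall_zpow_apply_eq hT hTinv hμ (k := m) (by exact_mod_cast hm)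
    (measurableSet_singleton y) hx ?_)
  rintro _ rfl
  rwa [zpow_natCast, Equiv.Perm.coe_pow]

end Ergodic

section Metric

variable {X : Type*} [MetricSpace X] [MeasurableSpace X] [BorelSpace X]

theorem exists_measurable_partition_dist_lt [TopologicalSpace.SeparableSpace X] {r : ℝ}
    (hr : 0 < r) : ∃ C : ℕ → Set X, (∀ i, MeasurableSet (C i)) ∧ Pairwise (Disjoint on C) ∧
      ⋃ i, C i = univ ∧ ∀ i, ∀ x ∈ C i, ∀ y ∈ C i, dist x y < r := by
  rcases isEmpty_or_nonempty X with hX | hX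
  · exact ⟨fun _ => ∅, by simp, by simp [Pairwise], Subsingleton.elim _ _, by simp⟩
  set q := TopologicalSpace.denseSeq X
  refine ⟨disjointed fun i => ball (q i) (r / 2), .disjointed fun _ => measurableSet_ball,
    disjoint_disjointed _, ?_, fun i x hx y hy => ?_⟩
  · rw [iUnion_disjointed, eq_univ_iff_forall]
    intro x
    simpa [dist_comm] using
      denseRange_iff.1 (TopologicalSpace.denseRange_denseSeq X) x _ (half_pos hr)
  · have hx' := mem_ball.1 (disjointed_subset _ i hx)
    have hy' := mem_ball.1 (disjointed_subset _ i hy)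
    linarith [dist_triangle_right x y (q i)]

theorem tendsto_prod_setOf_dist_lt [SecondCountableTopology X] (ν : Measure X)
    [IsFiniteMeasure ν] (hν : ∀ x, ν {x} = 0) :
    Tendsto (fun r => (ν.prod ν) {p : X × X | dist p.1 p.2 < r}) (𝓝[>] 0) (𝓝 0) := by
  have hmeas : ∀ r : ℝ, MeasurableSet {p : X × X | dist p.1 p.2 < r} := fun r =>
    measurableSet_lt measurable_dist measurable_const
  have hlim := tendsto_measure_biInter_gt (μ := ν.prod ν) (a := (0 : ℝ))
    (fun r _ => (hmeas r).nullMeasurableSet)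
    (fun i j _ hij p hp => lt_of_lt_of_le hp hij) ⟨1, one_pos, measure_ne_top _ _⟩
  have hdiag : ⋂ r > (0 : ℝ), {p : X × X | dist p.1 p.2 < r} = diagonal X := by
    ext p
    simp only [mem_iInter, mem_ofPred_eq, mem_diagonal_iff]
    exact ⟨fun h => dist_le_zero.1 (le_of_forall_pos_lt_add fun ε hε => by simpa using h ε hε),
      fun h r hr => by simpa [h] using hr⟩
  have hzero : (ν.prod ν) (diagonal X) = 0 := by
    rw [Measure.prod_apply measurableSet_diagonal]
    have hslice : ∀ x : X, Prod.mk x ⁻¹' diagonal X = {x} := fun x => by ext; simp [eq_comm]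
    simp [hslice, hν]
  rwa [hdiag, hzero] at hlim

end Metric

section SecondMoment

variable {X Ω : Type*} [MeasurableSpace X] [MeasurableSpace Ω] {P : Measure Ω}
  {N : Ω → Measure X} {μ : Measure X}

/-- `μ (A₁ ∩ A₂) + μ A₁ * μ A₂` is the second moment measure of the Poisson process of intensity
`μ`. -/
def HasPoissonSecondMoment (P : Measure Ω) (N : Ω → Measure X) (μ : Measure X) : Prop :=
  ∀ A₁ A₂ : Set X, MeasurableSet A₁ → MeasurableSet A₂ →
    0 < μ A₁ → μ A₁ < ⊤ → 0 < μ A₂ → μ A₂ < ⊤ →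
    ∫⁻ ω, N ω A₁ * N ω A₂ ∂P = μ (A₁ ∩ A₂) + μ A₁ * μ A₂

theorem HasPoissonSecondMoment.lintegral_mul_le (hN : HasPoissonSecondMoment P N μ)
    (hnull : ∀ A, MeasurableSet A → μ A = 0 → ∀ᵐ ω ∂P, N ω A = 0) {A B : Set X}
    (hA : MeasurableSet A) (hB : MeasurableSet B) (hAB : Disjoint A B) (hAfin : μ A < ⊤)
    (hBfin : μ B < ⊤) : ∫⁻ ω, N ω A * N ω B ∂P ≤ μ A * μ B := by
  by_cases h0 : μ A = 0 ∨ μ B = 0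
  · have hae : (fun ω => N ω A * N ω B) =ᵐ[P] 0 := by
      rcases h0 with h0 | h0
      · filter_upwards [hnull A hA h0] with ω hω using by simp [hω]
      · filter_upwards [hnull B hB h0] with ω hω using by simp [hω]
    simp [lintegral_congr_ae hae]
  · push Not at h0
    rw [hN A B hA hB (pos_iff_ne_zero.2 h0.1) hAfin (pos_iff_ne_zero.2 h0.2) hBfin,
      hAB.inter_eq, measure_empty, zero_add]

theorem HasPoissonSecondMoment.measure_exists_pair_le (hN : HasPoissonSecondMoment P N μ)
    (hNmeas : Measurable N) (hnull : ∀ A, MeasurableSet A → μ A = 0 → ∀ᵐ ω ∂P, N ω A = 0)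
    {A B : Set X} (hA : MeasurableSet A) (hB : MeasurableSet B) (hAB : Disjoint A B)
    (hAfin : μ A < ⊤) (hBfin : μ B < ⊤) {φ : X → X} (hφ : MapsTo φ A B) :
    P {ω | ∃ x ∈ A, N ω {x} = 1 ∧ N ω {φ x} = 1} ≤ μ A * μ B := by
  have hsub : {ω | ∃ x ∈ A, N ω {x} = 1 ∧ N ω {φ x} = 1} ⊆ {ω | 1 ≤ N ω A * N ω B} := by
    rintro ω ⟨x, hx, hx1, hx2⟩
    show 1 ≤ N ω A * N ω B
    calc (1 : ℝ≥0∞) = N ω {x} * N ω {φ x} := by rw [hx1, hx2, one_mul]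
      _ ≤ N ω A * N ω B := mul_le_mul' (measure_mono (singleton_subset_iff.2 hx))
          (measure_mono (singleton_subset_iff.2 (hφ hx)))
  have hmeas : Measurable fun ω => N ω A * N ω B :=
    ((Measure.measurable_coe hA).comp hNmeas).mul ((Measure.measurable_coe hB).comp hNmeas)
  calc P {ω | ∃ x ∈ A, N ω {x} = 1 ∧ N ω {φ x} = 1} ≤ P {ω | 1 ≤ N ω A * N ω B} :=
        measure_mono hsub
    _ ≤ ∫⁻ ω, N ω A * N ω B ∂P := by simpa using mul_meas_ge_le_lintegral₀ hmeas.aemeasurable 1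
    _ ≤ μ A * μ B := hN.lintegral_mul_le hnull hA hB hAB hAfin hBfin

end SecondMoment

section Freeness

variable {X Ω : Type*} [MetricSpace X] [MeasurableSpace X] [BorelSpace X]
  [SecondCountableTopology X] [MeasurableSpace Ω] {P : Measure Ω} {N : Ω → Measure X}
  {μ : Measure X}

theorem HasPoissonSecondMoment.measure_exists_pair_le_prod (hN : HasPoissonSecondMoment P N μ)
    (hNmeas : Measurable N) (hnull : ∀ A, MeasurableSet A → μ A = 0 → ∀ᵐ ω ∂P, N ω A = 0)
    (e : X ≃ᵐ X) (he : MeasurePreserving e μ μ) {W : Set X} (hW : MeasurableSet W)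
    (hWfin : μ W < ⊤) {ε r : ℝ} (hr : 0 < r) (hrε : r ≤ ε) (hWe : ∀ x ∈ W, ε ≤ dist x (e x)) :
    P {ω | ∃ x ∈ W, N ω {x} = 1 ∧ N ω {e x} = 1} ≤
      ((μ.restrict W).prod (μ.restrict W)) {p | dist p.1 p.2 < r} := by
  have : IsFiniteMeasure (μ.restrict W) := isFiniteMeasure_restrict.2 hWfin.ne
  obtain ⟨C, hCm, hCd, hCU, hCr⟩ := exists_measurable_partition_dist_lt (X := X) hr
  set A := fun i => C i ∩ W
  have hAm : ∀ i, MeasurableSet (A i) := fun i => (hCm i).inter hW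
  have hAfin : ∀ i, μ (A i) < ⊤ := fun i => (measure_mono inter_subset_right).trans_lt hWfin
  have heA : ∀ i, μ (e.symm ⁻¹' A i) = μ (A i) := fun i =>
    (he.symm e).measure_preimage_equiv _
  -- `e` moves points of `W` by at least `ε ≥ r`, so it moves every piece off itself.
  have hdisj : ∀ i, Disjoint (A i) (e.symm ⁻¹' A i) := by
    refine fun i => disjoint_left.2 fun y hy hy' => ?_
    have hclose := hCr i _ hy'.1 y hy.1
    have hfar := hWe _ hy'.2
    rw [e.apply_symm_apply] at hfar
    linarith
  have hcover : {ω | ∃ x ∈ W, N ω {x} = 1 ∧ N ω {e x} = 1} ⊆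
      ⋃ i, {ω | ∃ x ∈ A i, N ω {x} = 1 ∧ N ω {e x} = 1} := by
    rintro ω ⟨x, hx, hxN⟩
    obtain ⟨i, hi⟩ := mem_iUnion.1 (hCU ▸ mem_univ x)
    exact mem_iUnion.2 ⟨i, x, ⟨hi, hx⟩, hxN⟩
  calc P {ω | ∃ x ∈ W, N ω {x} = 1 ∧ N ω {e x} = 1}
      ≤ ∑' i, P {ω | ∃ x ∈ A i, N ω {x} = 1 ∧ N ω {e x} = 1} :=
        (measure_mono hcover).trans (measure_iUnion_le _)
    _ ≤ ∑' i, μ (A i) * μ (A i) := ENNReal.tsum_le_tsum fun i => by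
        simpa only [heA] using hN.measure_exists_pair_le hNmeas hnull (hAm i)
          (e.symm.measurable (hAm i)) (hdisj i) (hAfin i) ((heA i).trans_lt (hAfin i))
          fun x hx => by rwa [mem_preimage, e.symm_apply_apply]
    _ = ((μ.restrict W).prod (μ.restrict W)) (⋃ i, C i ×ˢ C i) := by
        rw [measure_iUnion (fun i j hij => disjoint_prod.2 (.inl (hCd hij)))
          fun i => (hCm i).prod (hCm i)]
        exact tsum_congr fun i => by rw [Measure.prod_prod, Measure.restrict_apply (hCm i)]
    _ ≤ ((μ.restrict W).prod (μ.restrict W)) {p | dist p.1 p.2 < r} :=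
        measure_mono (iUnion_subset fun i p hp => hCr i _ hp.1 _ hp.2)

theorem HasPoissonSecondMoment.measure_exists_pair_eq_zero (hN : HasPoissonSecondMoment P N μ)
    (hNmeas : Measurable N) (hnull : ∀ A, MeasurableSet A → μ A = 0 → ∀ᵐ ω ∂P, N ω A = 0)
    (hμ : ∀ x, μ {x} = 0) (e : X ≃ᵐ X) (he : MeasurePreserving e μ μ) {W : Set X}
    (hW : MeasurableSet W) (hWfin : μ W < ⊤) {ε : ℝ} (hε : 0 < ε)
    (hWe : ∀ x ∈ W, ε ≤ dist x (e x)) :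
    P {ω | ∃ x ∈ W, N ω {x} = 1 ∧ N ω {e x} = 1} = 0 := by
  have : IsFiniteMeasure (μ.restrict W) := isFiniteMeasure_restrict.2 hWfin.ne
  have hlim := tendsto_prod_setOf_dist_lt (μ.restrict W) fun x =>
    nonpos_iff_eq_zero.1 ((Measure.restrict_apply_le _ _).trans (hμ x).le)
  refine nonpos_iff_eq_zero.1 (ge_of_tendsto hlim ?_)
  filter_upwards [Ioc_mem_nhdsGT hε] with r hr using
    hN.measure_exists_pair_le_prod hNmeas hnull e he hW hWfin hr.1 hr.2 hWe

theorem HasPoissonSecondMoment.ae_forall_not_pair [SigmaFinite μ]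
    (hN : HasPoissonSecondMoment P N μ) (hNmeas : Measurable N)
    (hnull : ∀ A, MeasurableSet A → μ A = 0 → ∀ᵐ ω ∂P, N ω A = 0) (hμ : ∀ x, μ {x} = 0)
    (e : X ≃ᵐ X) (he : MeasurePreserving e μ μ) (hfix : μ {x | e x = x} = 0) :
    ∀ᵐ ω ∂P, ∀ x, ¬(N ω {x} = 1 ∧ N ω {e x} = 1) := by
  set W : ℕ → ℕ → Set X := fun n j => spanningSets μ n ∩ {x | 1 / (j + 1 : ℝ) ≤ dist x (e x)}
  have hW : ∀ n j, ∀ᵐ ω ∂P, ω ∉ {ω | ∃ x ∈ W n j, N ω {x} = 1 ∧ N ω {e x} = 1} := fun n j =>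
    measure_eq_zero_iff_ae_notMem.1 <| hN.measure_exists_pair_eq_zero hNmeas hnull hμ e he
      ((measurableSet_spanningSets μ n).inter
        (measurableSet_le measurable_const (measurable_id.dist e.measurable)))
      ((measure_mono inter_subset_left).trans_lt (measure_spanningSets_lt_top μ n))
      Nat.one_div_pos_of_nat fun _ hx => hx.2
  have hF : ∀ᵐ ω ∂P, N ω {x | e x = x} = 0 :=
    hnull _ (measurableSet_eq_fun e.measurable measurable_id) hfix
  filter_upwards [hF, ae_all_iff.2 fun n => ae_all_iff.2 (hW n)] with ω hFω hWω x ⟨hx, hex⟩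
  by_cases hfx : e x = x
  · have hle := measure_mono (μ := N ω) (singleton_subset_iff.2 (show x ∈ {x | e x = x} from hfx))
    simp [hx, hFω] at hle
  · obtain ⟨j, hj⟩ := exists_nat_one_div_lt (dist_pos.2 (Ne.symm hfx))
    exact hWω (spanningSetsIndex μ x) j ⟨x, ⟨mem_spanningSetsIndex μ x, hj.le⟩, hx, hex⟩

end Freeness

theorem isLocallyFiniteMeasure_of_forall_isBounded {X : Type*} [PseudoMetricSpace X]
    [MeasurableSpace X] {μ : Measure X} (hμ : ∀ s : Set X, Bornology.IsBounded s → μ s < ⊤) :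
    IsLocallyFiniteMeasure μ :=
  ⟨fun x => ⟨ball x 1, ball_mem_nhds x one_pos, hμ _ isBounded_ball⟩⟩

theorem stmt4_general {X : Type*} [MetricSpace X] [TopologicalSpace.SeparableSpace X]
    [MeasurableSpace X] [BorelSpace X]
    (μ : Measure X) (hμbdd : ∀ s : Set X, Bornology.IsBounded s → μ s < ⊤)
    (hμinf : μ Set.univ = ⊤)
    (T : Equiv.Perm X) (hTinv : Measurable ⇑T.symm)
    (hTcons : Conservative ⇑T μ) (hTerg : Ergodic ⇑T μ)
    {Ω : Type*} [MeasurableSpace Ω] (P : Measure Ω)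
    (S : Equiv.Perm Ω)
    (N : Ω → Measure X) (hN : IsTPointProcess μ T P ⇑S N)
    (hM2 : ∀ A₁ A₂ : Set X, MeasurableSet A₁ → MeasurableSet A₂ →
      0 < μ A₁ → μ A₁ < ⊤ → 0 < μ A₂ → μ A₂ < ⊤ →
      ∫⁻ ω, N ω A₁ * N ω A₂ ∂P = μ (A₁ ∩ A₂) + μ A₁ * μ A₂) :
    IsFree T P N := by
  have := isLocallyFiniteMeasure_of_forall_isBounded hμbdd
  have hatom (x : X) : μ {x} = 0 := measure_singleton_eq_zero_of_conservative hTerg hTcons hTinv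
    hμinf x (hμbdd _ Bornology.isBounded_singleton).ne
  intro k hk
  have hTk := measurePreserving_perm_zpow hTerg.toMeasurePreserving hTinv
  let e : X ≃ᵐ X := ⟨T ^ k, (hTk k).measurable, by
    simpa only [← Equiv.Perm.inv_def, ← zpow_neg] using (hTk (-k)).measurable⟩
  exact (show HasPoissonSecondMoment P N μ from hM2).ae_forall_not_pair hN.measurable hN.null
    hatom e (hTk k) (measure_fixedPoints_zpow_eq_zero hTerg hTinv hμinf hk)

/-- a square integrable `T`-point process whose second order moment measure is
`μ(A₁ ∩ A₂) + μ(A₁)μ(A₂)` is free. -/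
theorem stmt4 {X : Type*} [MetricSpace X] [CompleteSpace X] [TopologicalSpace.SeparableSpace X]
    [MeasurableSpace X] [BorelSpace X]
    (μ : Measure X) (hμbdd : ∀ s : Set X, Bornology.IsBounded s → μ s < ⊤)
    (hμinf : μ Set.univ = ⊤)
    (T : Equiv.Perm X) (hT : Measurable ⇑T) (hTinv : Measurable ⇑T.symm)
    (hTpres : MeasurePreserving ⇑T μ μ)
    (hTcons : Conservative ⇑T μ) (hTerg : Ergodic ⇑T μ)
    {Ω : Type*} [MeasurableSpace Ω] (P : Measure Ω) [IsProbabilityMeasure P]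
    (S : Equiv.Perm Ω) (hS : Measurable ⇑S) (hSinv : Measurable ⇑S.symm)
    (hSP : MeasurePreserving ⇑S P P)
    (N : Ω → Measure X) (hN : IsTPointProcess μ T P ⇑S N)
    (hmom : HasMomentsOfOrder P N μ 2)
    (hM2 : ∀ A₁ A₂ : Set X, MeasurableSet A₁ → MeasurableSet A₂ →
      0 < μ A₁ → μ A₁ < ⊤ → 0 < μ A₂ → μ A₂ < ⊤ →
      ∫⁻ ω, N ω A₁ * N ω A₂ ∂P = μ (A₁ ∩ A₂) + μ A₁ * μ A₂) :
    IsFree T P N :=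
  stmt4_general μ hμbdd hμinf T hTinv hTcons hTerg P S N hN hM2

end SuShi
end

section
/- Assume (X,𝒜,μ,T) admits a measurable law of large numbers. Let λ be Lebesgue measure on ℝ₊ with Borel σ-algebra ℬ, and let 𝓛 ⊆ 𝒜⊗ℬ be a sub-σ-algebra which is a σ-finite factor of the product system (X×ℝ₊, 𝒜⊗ℬ, μ⊗λ, T×Id): (T×Id)⁻¹𝓛 = 𝓛 modulo μ⊗λ-null sets, and the restriction of μ⊗λ to 𝓛 is σ-finite. Then there exists a Borel set C ⊆ ℝ₊ with 0 < λ(C) < ∞ such that X×C belongs to 𝓛 (modulo μ⊗λ-null sets). -/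
/-!
A set `B ∈ 𝓛` with `0 < (μ ⊗ λ)(B) < ∞` exists because the factor is σ-finite. Invariance of `𝓛`
gives sets `B_k ∈ 𝓛` with `B_k = (T × Id)⁻ᵏ B` a.e., so `G(p) = L((1_{B_k}(p))_k)` is
`𝓛`-measurable. On each fibre `X × {r}` the law of large numbers identifies
`L((1_B((T × Id)ᵏ p))_k)` with `μ(B_r)`, `B_r` the section of `B` at `r`; by Fubini `G(x, r) = μ(B_r)`
a.e. Hence every superlevel set `X × {r | a < μ(B_r)}` lies in `𝓛` modulo null sets, and since
`∫ μ(B_r) dλ(r) = (μ ⊗ λ)(B)` is positive and finite, Markov's inequality yields an `a` for which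
`C = {r | a < μ(B_r)}` has `0 < λ(C) < ∞`.
-/

open MeasureTheory ProbabilityTheory Filter
open scoped ENNReal NNReal

namespace SuShi

section

variable {α : Type*} {mα : MeasurableSpace α} {m : Measure α}

theorem exists_measurableSet_pos_lt_top [SigmaFinite m] (hm : m ≠ 0) :
    ∃ s, MeasurableSet s ∧ 0 < m s ∧ m s < ∞ := by
  obtain ⟨n, hn⟩ := exists_measure_pos_of_not_measure_iUnion_null (s := spanningSets m)
    (by rwa [iUnion_spanningSets, Ne, Measure.measure_univ_eq_zero])
  exact ⟨_, measurableSet_spanningSets m n, hn, measure_spanningSets_lt_top m n⟩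

theorem exists_measure_setOf_lt_pos_lt_top {g : α → ℝ≥0∞} (hg : Measurable g)
    (hpos : 0 < ∫⁻ x, g x ∂m) (hfin : ∫⁻ x, g x ∂m ≠ ∞) :
    ∃ a, 0 < m {x | a < g x} ∧ m {x | a < g x} < ∞ := by
  have hsupp : Function.support g = ⋃ n : ℕ, {x | (n : ℝ≥0∞)⁻¹ < g x} := by
    ext x
    simp only [Function.mem_support, Set.mem_iUnion, Set.mem_ofPred_eq]
    exact ⟨fun h => ENNReal.exists_inv_nat_lt h, fun ⟨_, hn⟩ => (bot_le.trans_lt hn).ne'⟩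
  obtain ⟨n, hn⟩ := exists_measure_pos_of_not_measure_iUnion_null (μ := m)
    (hsupp ▸ ((lintegral_pos_iff_support hg).1 hpos).ne')
  set ε : ℝ≥0∞ := (n : ℝ≥0∞)⁻¹
  have hmarkov : ε * m {x | ε < g x} ≤ ∫⁻ x, g x ∂m := calc
    _ ≤ ε * m {x | ε ≤ g x} := by gcongr; exact le_of_lt
    _ ≤ ∫⁻ x, g x ∂m := mul_meas_ge_le_lintegral₀ hg.aemeasurable ε
  exact ⟨ε, hn, ENNReal.lt_top_of_mul_ne_top_right (ne_top_of_le_ne_top hfin hmarkov)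
    (ENNReal.inv_ne_zero.2 (ENNReal.natCast_ne_top n))⟩

end

theorem exists_measurableSet_trim_pos_lt_top {α : Type*} {L m0 : MeasurableSpace α}
    {m : Measure[m0] α} (hle : L ≤ m0) [SigmaFinite (m.trim hle)] (hm : m ≠ 0) :
    ∃ s, MeasurableSet[L] s ∧ 0 < m s ∧ m s < ∞ := by
  have htrim : m.trim hle ≠ 0 := by
    rwa [Ne, ← Measure.measure_univ_eq_zero, trim_measurableSet_eq hle MeasurableSet.univ,
      Measure.measure_univ_eq_zero]
  obtain ⟨s, hs, hpos, hfin⟩ := exists_measurableSet_pos_lt_top (mα := L) htrim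
  rw [trim_measurableSet_eq hle hs] at hpos hfin
  exact ⟨s, hs, hpos, hfin⟩

theorem exists_iterate_preimage_ae_eq {Z : Type*} {L m0 : MeasurableSpace Z} {ν : Measure[m0] Z}
    {f : Z → Z} (hf : Measure.QuasiMeasurePreserving f ν ν)
    (hinv : ∀ B, MeasurableSet[L] B → ∃ B', MeasurableSet[L] B' ∧ f ⁻¹' B =ᵐ[ν] B')
    {B : Set Z} (hB : MeasurableSet[L] B) (k : ℕ) :
    ∃ B', MeasurableSet[L] B' ∧ f^[k] ⁻¹' B =ᵐ[ν] B' := by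
  induction k with
  | zero => exact ⟨B, hB, .rfl⟩
  | succ k ih =>
    obtain ⟨Bk, hBk, hk⟩ := ih
    obtain ⟨B', hB', hB'k⟩ := hinv Bk hBk
    refine ⟨B', hB', ?_⟩
    rw [Function.iterate_succ, Set.preimage_comp]
    exact (hf.preimage_ae_eq hk).trans hB'k

theorem measurable_comp_indicators {Z : Type*} {mZ : MeasurableSpace Z}
    {L₀ : (ℕ → ℝ≥0∞) → ℝ≥0∞} (hL₀ : Measurable L₀) {s : ℕ → Set Z}
    (hs : ∀ k, MeasurableSet (s k)) :
    Measurable fun z => L₀ fun k => (s k).indicator 1 z :=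
  hL₀.comp (measurable_pi_lambda _ fun k => measurable_one.indicator (hs k))

theorem ae_prod_lln_eq_measure_slice {X Y : Type*} [MeasurableSpace X] [MeasurableSpace Y]
    {μ : Measure X} {ν : Measure Y} [SFinite μ] [SFinite ν] {T : X → X} (hT : Measurable T)
    {L₀ : (ℕ → ℝ≥0∞) → ℝ≥0∞} (hL₀m : Measurable L₀)
    (hL₀ : ∀ B : Set X, MeasurableSet B →
      ∀ᵐ x ∂μ, L₀ (fun k => B.indicator (1 : X → ℝ≥0∞) (T^[k] x)) = μ B)
    {B : Set (X × Y)} (hB : MeasurableSet B) :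
    ∀ᵐ p ∂μ.prod ν, L₀ (fun k => ((Prod.map T id)^[k] ⁻¹' B).indicator 1 p) =
      μ ((·, p.2) ⁻¹' B) := by
  have hmeas : MeasurableSet {p : X × Y |
      L₀ (fun k => ((Prod.map T id)^[k] ⁻¹' B).indicator 1 p) = μ ((·, p.2) ⁻¹' B)} :=
    measurableSet_eq_fun
      (measurable_comp_indicators hL₀m fun k => (hT.prodMap measurable_id).iterate k hB)
      ((measurable_measure_prodMk_right hB).comp measurable_snd)
  rw [Measure.ae_prod_iff_ae_ae hmeas, Measure.ae_ae_comm hmeas]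
  refine .of_forall fun y => (hL₀ _ (measurable_prodMk_right (y := y) hB)).mono fun x hx => ?_
  simp only [Prod.map_iterate, Function.iterate_id]
  exact hx

theorem stmt12_general {X : Type*} [MeasurableSpace X] (μ : Measure X) [SigmaFinite μ]
    (hμinf : μ Set.univ = ⊤) (T : Equiv.Perm X) (hTpres : MeasurePreserving ⇑T μ μ)
    (hLLN : MeasurableLLN μ ⇑T)
    (L : MeasurableSpace (X × ℝ)) (hle : L ≤ Prod.instMeasurableSpace)
    (hσfin : SigmaFinite ((μ.prod ((volume : Measure ℝ).restrict (Set.Ici 0))).trim hle))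
    (hinv₁ : ∀ B : Set (X × ℝ), MeasurableSet[L] B → ∃ B' : Set (X × ℝ),
      MeasurableSet[L] B' ∧
      (μ.prod ((volume : Measure ℝ).restrict (Set.Ici 0)))
        (symmDiff (Prod.map ⇑T id ⁻¹' B) B') = 0) :
    ∃ C : Set ℝ, MeasurableSet C ∧
      0 < (volume : Measure ℝ).restrict (Set.Ici 0) C ∧
      (volume : Measure ℝ).restrict (Set.Ici 0) C < ⊤ ∧
      ∃ B : Set (X × ℝ), MeasurableSet[L] B ∧
        (μ.prod ((volume : Measure ℝ).restrict (Set.Ici 0)))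
          (symmDiff B (Set.univ ×ˢ C)) = 0 := by
  -- `L` is a local instance; restore the product σ-algebra as the default one.
  let _ : MeasurableSpace (X × ℝ) := Prod.instMeasurableSpace
  obtain ⟨L₀, hL₀m, hL₀⟩ := hLLN
  set ν := μ.prod ((volume : Measure ℝ).restrict (Set.Ici 0))
  have hν : ν ≠ 0 := by
    rw [← Measure.measure_univ_ne_zero, ← Set.univ_prod_univ, Measure.prod_prod, hμinf,
      Measure.restrict_apply_univ, Real.volume_Ici]
    simp
  obtain ⟨B, hBL, hB0, hBfin⟩ := exists_measurableSet_trim_pos_lt_top hle hν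
  have hB : MeasurableSet B := hle _ hBL
  choose Bk hBkL hBk using exists_iterate_preimage_ae_eq
    (hTpres.prod (.id _)).quasiMeasurePreserving
    (fun B hB => (hinv₁ B hB).imp fun _ h => ⟨h.1, measure_symmDiff_eq_zero_iff.1 h.2⟩) hBL
  set G : X × ℝ → ℝ≥0∞ := fun p => L₀ fun k => (Bk k).indicator 1 p
  have hGL : Measurable[L] G := measurable_comp_indicators (mZ := L) hL₀m hBkL
  have hG : ∀ᵐ p ∂ν, G p = μ ((·, p.2) ⁻¹' B) := by
    filter_upwards [ae_prod_lln_eq_measure_slice hTpres.measurable hL₀m hL₀ hB,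
      ae_all_iff.2 hBk] with p hp hpk
    rw [← hp]
    exact congrArg L₀ (funext fun k => Set.indicator_eq_indicator (Iff.of_eq (hpk k)).symm rfl)
  have hint : ∫⁻ r, μ ((·, r) ⁻¹' B) ∂(volume : Measure ℝ).restrict (Set.Ici 0) = ν B :=
    (Measure.prod_apply_symm hB).symm
  obtain ⟨a, hpos, hfin⟩ := exists_measure_setOf_lt_pos_lt_top
    (measurable_measure_prodMk_right hB) (hint ▸ hB0) (hint ▸ hBfin.ne)
  refine ⟨_, measurableSet_lt measurable_const (measurable_measure_prodMk_right hB), hpos, hfin,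
    G ⁻¹' Set.Ioi a, hGL measurableSet_Ioi,
    measure_symmDiff_eq_zero_iff.2 (hG.mono fun p hp => ?_)⟩
  change (a < G p) = (True ∧ a < μ ((·, p.2) ⁻¹' B))
  rw [hp, true_and]

/-- if `(X,μ,T)` admits a measurable law of large numbers, then every σ-finite
factor `L` of the product system `(X × ℝ₊, μ ⊗ λ, T × Id)` contains a set `X × C` with
`0 < λ(C) < ∞` (modulo null sets). -/
theorem stmt12 {X : Type*} [MetricSpace X] [CompleteSpace X] [TopologicalSpace.SeparableSpace X]
    [MeasurableSpace X] [BorelSpace X]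
    (μ : Measure X) [SigmaFinite μ]
    (hμbdd : ∀ s : Set X, Bornology.IsBounded s → μ s < ⊤)
    (hμinf : μ Set.univ = ⊤)
    (T : Equiv.Perm X) (hT : Measurable ⇑T) (hTinv : Measurable ⇑T.symm)
    (hTpres : MeasurePreserving ⇑T μ μ)
    (hTcons : Conservative ⇑T μ) (hTerg : Ergodic ⇑T μ)
    (hLLN : MeasurableLLN μ ⇑T)
    (L : MeasurableSpace (X × ℝ)) (hle : L ≤ Prod.instMeasurableSpace)
    (hσfin : SigmaFinite ((μ.prod ((volume : Measure ℝ).restrict (Set.Ici 0))).trim hle))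
    (hinv₁ : ∀ B : Set (X × ℝ), MeasurableSet[L] B → ∃ B' : Set (X × ℝ),
      MeasurableSet[L] B' ∧
      (μ.prod ((volume : Measure ℝ).restrict (Set.Ici 0)))
        (symmDiff (Prod.map ⇑T id ⁻¹' B) B') = 0)
    (hinv₂ : ∀ B : Set (X × ℝ), MeasurableSet[L] B → ∃ B' : Set (X × ℝ),
      MeasurableSet[L] B' ∧
      (μ.prod ((volume : Measure ℝ).restrict (Set.Ici 0)))
        (symmDiff B (Prod.map ⇑T id ⁻¹' B')) = 0) :
    ∃ C : Set ℝ, MeasurableSet C ∧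
      0 < (volume : Measure ℝ).restrict (Set.Ici 0) C ∧
      (volume : Measure ℝ).restrict (Set.Ici 0) C < ⊤ ∧
      ∃ B : Set (X × ℝ), MeasurableSet[L] B ∧
        (μ.prod ((volume : Measure ℝ).restrict (Set.Ici 0)))
          (symmDiff B (Set.univ ×ˢ C)) = 0 :=
  stmt12_general μ hμinf T hTpres hLLN L hle hσfin hinv₁

end SuShi
end

section
/- Let N be a T-point process on an invertible probability-preserving system (Ω,ℱ,ℙ,S) with intensity μ and moments of order n, for some n ≥ 1. Let A ∈ 𝒜_f and let ((A_i^ℓ)_{1≤i≤p_ℓ})_{ℓ≥1} be a generating sequence of partitions of A: an increasing (refining) sequence of finite measurable partitions of A such that for all x ≠ y in A there exists ℓ with x and y in different atoms of (A_i^ℓ)_{1≤i≤p_ℓ}. Then ∑_{i=1}^{p_ℓ} E[(N(A_i^ℓ))^n] → μ(A) as ℓ → ∞ (equivalently, the n-order moment measure of N assigns mass μ(A) to the diagonal part Δ_n ∩ (A×⋯×A)). -/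
open MeasureTheory ProbabilityTheory Filter
open scoped ENNReal NNReal

namespace SuShi

/-!
Almost surely `N` is a counting measure whose restriction to `A` is finite, because `N(A)^n` is
integrable. Since the partitions refine and separate points, from some level on every atom
contains at most one point of `N`, so `∑ᵢ N(Aᵢ^ℓ)^n = ∑ᵢ N(Aᵢ^ℓ) = N(A)` eventually. As
`∑ᵢ N(Aᵢ^ℓ)^n ≤ N(A)^n`, dominated convergence gives `∑ᵢ E[N(Aᵢ^ℓ)^n] → E[N(A)] = μ(A)`.
-/

lemma sum_pow_le_pow_sum {R ι : Type*} [Semiring R] [PartialOrder R] [IsOrderedRing R]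
    (s : Finset ι) {f : ι → R} (hf : ∀ i ∈ s, 0 ≤ f i) {n : ℕ} (hn : n ≠ 0) :
    ∑ i ∈ s, f i ^ n ≤ (∑ i ∈ s, f i) ^ n := by
  obtain ⟨m, rfl⟩ := Nat.exists_eq_succ_of_ne_zero hn
  calc ∑ i ∈ s, f i ^ (m + 1)
      ≤ ∑ i ∈ s, (∑ j ∈ s, f j) ^ m * f i := by
        refine Finset.sum_le_sum fun i hi => ?_
        rw [pow_succ]
        exact mul_le_mul_of_nonneg_right
          (pow_le_pow_left₀ (hf i hi) (Finset.single_le_sum hf hi) m) (hf i hi)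
    _ = (∑ i ∈ s, f i) ^ (m + 1) := by rw [← Finset.mul_sum, pow_succ]

section Partitions

variable {X : Type*} {ι : ℕ → Type*} {Ap : (ℓ : ℕ) → ι ℓ → Set X} {A : Set X}

lemma exists_superset_atom_of_le
    (hrefine : ∀ ℓ, ∀ i : ι (ℓ + 1), ∃ i' : ι ℓ, Ap (ℓ + 1) i ⊆ Ap ℓ i')
    {ℓ ℓ' : ℕ} (hle : ℓ ≤ ℓ') (i : ι ℓ') : ∃ i' : ι ℓ, Ap ℓ' i ⊆ Ap ℓ i' := by
  induction ℓ', hle using Nat.le_induction with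
  | base => exact ⟨i, subset_rfl⟩
  | succ m _ ih =>
    obtain ⟨j, hij⟩ := hrefine m i
    obtain ⟨i', hji'⟩ := ih j
    exact ⟨i', hij.trans hji'⟩

lemma eventually_not_mem_same_atom
    (hrefine : ∀ ℓ, ∀ i : ι (ℓ + 1), ∃ i' : ι ℓ, Ap (ℓ + 1) i ⊆ Ap ℓ i') {x y : X}
    (hxy : ∃ ℓ, ∀ i, ¬(x ∈ Ap ℓ i ∧ y ∈ Ap ℓ i)) :
    ∀ᶠ ℓ in atTop, ∀ i, ¬(x ∈ Ap ℓ i ∧ y ∈ Ap ℓ i) := by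
  obtain ⟨ℓ₀, hℓ₀⟩ := hxy
  filter_upwards [eventually_ge_atTop ℓ₀] with ℓ hℓ i ⟨hx, hy⟩
  obtain ⟨i', hi'⟩ := exists_superset_atom_of_le hrefine hℓ i
  exact hℓ₀ i' ⟨hi' hx, hi' hy⟩

lemma eventually_subsingleton_atom_inter
    (hrefine : ∀ ℓ, ∀ i : ι (ℓ + 1), ∃ i' : ι ℓ, Ap (ℓ + 1) i ⊆ Ap ℓ i')
    (hsep : ∀ x ∈ A, ∀ y ∈ A, x ≠ y → ∃ ℓ, ∀ i, ¬(x ∈ Ap ℓ i ∧ y ∈ Ap ℓ i))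
    {F : Set X} (hF : F.Finite) (hFA : F ⊆ A) :
    ∀ᶠ ℓ in atTop, ∀ i, (Ap ℓ i ∩ F).Subsingleton := by
  have hpairs : ∀ᶠ ℓ in atTop, ∀ x ∈ F, ∀ y ∈ F, x ≠ y → ∀ i, ¬(x ∈ Ap ℓ i ∧ y ∈ Ap ℓ i) :=
    hF.eventually_all.2 fun x hx => hF.eventually_all.2 fun y hy =>
      eventually_imp_distrib_left.2 fun hxy =>
        eventually_not_mem_same_atom hrefine (hsep x (hFA hx) y (hFA hy) hxy)
  filter_upwards [hpairs] with ℓ hℓ i x hx y hy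
  by_contra hxy
  exact hℓ x hx.2 y hy.2 hxy i ⟨hx.1, hy.1⟩

end Partitions

section CountingMeasure

variable {X : Type*} [MeasurableSpace X]

lemma sum_measure_eq_of_iUnion_eq {ι : Type*} [Fintype ι] (ν : Measure X) {B : ι → Set X}
    {A : Set X} (hmeas : ∀ i, MeasurableSet (B i))
    (hdisj : Pairwise fun i i' => Disjoint (B i) (B i'))
    (hcover : ⋃ i, B i = A) : ∑ i, ν (B i) = ν A := by
  rw [← hcover, measure_iUnion hdisj hmeas, tsum_fintype]

lemma count_restrict_pow_eq_self [MeasurableSingletonClass X] {D B : Set X}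
    (hB : MeasurableSet B) (hBD : (B ∩ D).Subsingleton) {n : ℕ} (hn : n ≠ 0) :
    Measure.count.restrict D B ^ n = Measure.count.restrict D B := by
  rw [Measure.restrict_apply hB]
  rcases hBD.eq_empty_or_singleton with h | ⟨x, h⟩
  · rw [h, measure_empty, zero_pow hn]
  · rw [h, Measure.count_singleton, one_pow]

lemma eventually_sum_count_restrict_pow_eq [MeasurableSingletonClass X] {ι : ℕ → Type*}
    [∀ ℓ, Fintype (ι ℓ)] {Ap : (ℓ : ℕ) → ι ℓ → Set X} {A D : Set X} (hAD : (A ∩ D).Finite)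
    {n : ℕ} (hn : n ≠ 0) (hmeas : ∀ ℓ i, MeasurableSet (Ap ℓ i))
    (hdisj : ∀ ℓ, Pairwise fun i i' => Disjoint (Ap ℓ i) (Ap ℓ i'))
    (hcover : ∀ ℓ, ⋃ i, Ap ℓ i = A)
    (hrefine : ∀ ℓ, ∀ i : ι (ℓ + 1), ∃ i' : ι ℓ, Ap (ℓ + 1) i ⊆ Ap ℓ i')
    (hsep : ∀ x ∈ A, ∀ y ∈ A, x ≠ y → ∃ ℓ, ∀ i, ¬(x ∈ Ap ℓ i ∧ y ∈ Ap ℓ i)) :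
    ∀ᶠ ℓ in atTop, ∑ i, Measure.count.restrict D (Ap ℓ i) ^ n = Measure.count.restrict D A := by
  filter_upwards [eventually_subsingleton_atom_inter hrefine hsep hAD Set.inter_subset_left]
    with ℓ hℓ
  rw [← sum_measure_eq_of_iUnion_eq _ (hmeas ℓ) (hdisj ℓ) (hcover ℓ)]
  refine Finset.sum_congr rfl fun i _ => count_restrict_pow_eq_self (hmeas ℓ i) ?_ hn
  have hsub : Ap ℓ i ⊆ A := hcover ℓ ▸ Set.subset_iUnion (Ap ℓ) i
  exact (hℓ i).anti fun x hx => ⟨hx.1, hsub hx.1, hx.2⟩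

end CountingMeasure

theorem tendsto_sum_lintegral_pow_of_refining_partitions {X Ω : Type*} [MeasurableSpace X]
    [MeasurableSingletonClass X] [MeasurableSpace Ω] {P : Measure Ω} {N : Ω → Measure X}
    (hN : Measurable N) (hcount : ∀ᵐ ω ∂P, ∃ D : Set X, N ω = Measure.count.restrict D)
    {A : Set X} (hA : MeasurableSet A) {n : ℕ} (hn : n ≠ 0) (hmom : ∫⁻ ω, N ω A ^ n ∂P ≠ ⊤)
    {ι : ℕ → Type*} [∀ ℓ, Fintype (ι ℓ)] (Ap : (ℓ : ℕ) → ι ℓ → Set X)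
    (hmeas : ∀ ℓ i, MeasurableSet (Ap ℓ i))
    (hdisj : ∀ ℓ, Pairwise fun i i' => Disjoint (Ap ℓ i) (Ap ℓ i'))
    (hcover : ∀ ℓ, ⋃ i, Ap ℓ i = A)
    (hrefine : ∀ ℓ, ∀ i : ι (ℓ + 1), ∃ i' : ι ℓ, Ap (ℓ + 1) i ⊆ Ap ℓ i')
    (hsep : ∀ x ∈ A, ∀ y ∈ A, x ≠ y → ∃ ℓ, ∀ i, ¬(x ∈ Ap ℓ i ∧ y ∈ Ap ℓ i)) :
    Tendsto (fun ℓ => ∑ i, ∫⁻ ω, N ω (Ap ℓ i) ^ n ∂P) atTop (nhds (∫⁻ ω, N ω A ∂P)) := by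
  have hNB : ∀ B, MeasurableSet B → Measurable fun ω => N ω B :=
    fun B hB => (Measure.measurable_coe hB).comp hN
  simp_rw [← lintegral_finsetSum _ fun i _ => (hNB _ (hmeas _ i)).pow_const n]
  refine tendsto_lintegral_of_dominated_convergence (fun ω => N ω A ^ n)
    (fun ℓ => Finset.measurable_sum _ fun i _ => (hNB _ (hmeas ℓ i)).pow_const n)
    (fun ℓ => ae_of_all _ fun ω => ?_) hmom ?_
  · calc ∑ i, N ω (Ap ℓ i) ^ n
        ≤ (∑ i, N ω (Ap ℓ i)) ^ n := sum_pow_le_pow_sum _ (fun _ _ => zero_le) hn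
      _ = N ω A ^ n := by rw [sum_measure_eq_of_iUnion_eq _ (hmeas ℓ) (hdisj ℓ) (hcover ℓ)]
  · filter_upwards [hcount, ae_lt_top ((hNB A hA).pow_const n) hmom] with ω ⟨D, hD⟩ hfin
    have hAD : (A ∩ D).Finite := by
      rw [← Measure.count_apply_lt_top, ← Measure.restrict_apply hA, ← hD]
      exact (ENNReal.pow_lt_top_iff.1 hfin).resolve_right hn
    rw [hD]
    exact tendsto_const_nhds.congr' (EventuallyEq.symm
      (eventually_sum_count_restrict_pow_eq hAD hn hmeas hdisj hcover hrefine hsep))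

theorem stmt19_general {X : Type*} [MetricSpace X] [MeasurableSpace X] [BorelSpace X]
    (μ : Measure X) (T : Equiv.Perm X)
    {Ω : Type*} [MeasurableSpace Ω] (P : Measure Ω) (S : Equiv.Perm Ω)
    (N : Ω → Measure X) (hN : IsTPointProcess μ T P ⇑S N)
    (hint : HasIntensity P N μ)
    (n : ℕ) (hn : 1 ≤ n) (hmom : HasMomentsOfOrder P N μ n)
    (A : Set X) (hA : MeasurableSet A) (hA0 : 0 < μ A) (hAfin : μ A < ⊤)
    (p : ℕ → ℕ) (Ap : (ℓ : ℕ) → Fin (p ℓ) → Set X)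
    (hmeas : ∀ ℓ i, MeasurableSet (Ap ℓ i))
    (hdisj : ∀ ℓ, Pairwise fun i i' => Disjoint (Ap ℓ i) (Ap ℓ i'))
    (hcover : ∀ ℓ, ⋃ i, Ap ℓ i = A)
    (hrefine : ∀ ℓ, ∀ i : Fin (p (ℓ + 1)), ∃ i' : Fin (p ℓ), Ap (ℓ + 1) i ⊆ Ap ℓ i')
    (hsep : ∀ x ∈ A, ∀ y ∈ A, x ≠ y → ∃ ℓ, ∀ i, ¬(x ∈ Ap ℓ i ∧ y ∈ Ap ℓ i)) :
    Tendsto (fun ℓ => ∑ i : Fin (p ℓ), ∫⁻ ω, (N ω (Ap ℓ i)) ^ n ∂P)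
      atTop (nhds (μ A)) := by
  rw [← hint A hA]
  exact tendsto_sum_lintegral_pow_of_refining_partitions hN.measurable
    (hN.simple.mono fun _ ⟨D, _, _, hD⟩ => ⟨D, hD⟩) hA (Nat.one_le_iff_ne_zero.1 hn)
    (hmom A hA hA0 hAfin).ne Ap hmeas hdisj hcover hrefine hsep

/-- for a `T`-point process of intensity `μ` with moments of order `n`, the
diagonal part of the `n`-order moment measure on `A × ⋯ × A` has mass `μ(A)`: along a
generating sequence of partitions of `A`, `∑ᵢ E[N(Aᵢ^ℓ)^n] → μ(A)`. -/
theorem stmt19 {X : Type*} [MetricSpace X] [CompleteSpace X] [TopologicalSpace.SeparableSpace X]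
    [MeasurableSpace X] [BorelSpace X]
    (μ : Measure X) (hμbdd : ∀ s : Set X, Bornology.IsBounded s → μ s < ⊤)
    (hμinf : μ Set.univ = ⊤)
    (T : Equiv.Perm X) (hT : Measurable ⇑T) (hTinv : Measurable ⇑T.symm)
    (hTpres : MeasurePreserving ⇑T μ μ)
    (hTcons : Conservative ⇑T μ) (hTerg : Ergodic ⇑T μ)
    {Ω : Type*} [MeasurableSpace Ω] (P : Measure Ω) [IsProbabilityMeasure P]
    (S : Equiv.Perm Ω) (hS : Measurable ⇑S) (hSinv : Measurable ⇑S.symm)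
    (hSP : MeasurePreserving ⇑S P P)
    (N : Ω → Measure X) (hN : IsTPointProcess μ T P ⇑S N)
    (hint : HasIntensity P N μ)
    (n : ℕ) (hn : 1 ≤ n) (hmom : HasMomentsOfOrder P N μ n)
    (A : Set X) (hA : MeasurableSet A) (hA0 : 0 < μ A) (hAfin : μ A < ⊤)
    (p : ℕ → ℕ) (Ap : (ℓ : ℕ) → Fin (p ℓ) → Set X)
    (hmeas : ∀ ℓ i, MeasurableSet (Ap ℓ i))
    (hdisj : ∀ ℓ, Pairwise fun i i' => Disjoint (Ap ℓ i) (Ap ℓ i'))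
    (hcover : ∀ ℓ, ⋃ i, Ap ℓ i = A)
    (hrefine : ∀ ℓ, ∀ i : Fin (p (ℓ + 1)), ∃ i' : Fin (p ℓ), Ap (ℓ + 1) i ⊆ Ap ℓ i')
    (hsep : ∀ x ∈ A, ∀ y ∈ A, x ≠ y → ∃ ℓ, ∀ i, ¬(x ∈ Ap ℓ i ∧ y ∈ Ap ℓ i)) :
    Tendsto (fun ℓ => ∑ i : Fin (p ℓ), ∫⁻ ω, (N ω (Ap ℓ i)) ^ n ∂P)
      atTop (nhds (μ A)) :=
  stmt19_general μ T P S N hN hint n hn hmom A hA hA0 hAfin p Ap hmeas hdisj hcover hrefine hsep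

end SuShi
end
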